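/- For all indices 1 ≤ i, j ≤ ℓ, the difference operators H_i(u) and E_j(v) satisfy the Yangian Cartan–raising relation: (u − v)·(H_i(u)∘E_j(v) − E_j(v)∘H_i(u)) = −(iħ/2)·d_i·a_{ij}·(H_i(u)∘(E_j(u) − E_j(v)) + (E_j(u) − E_j(v))∘H_i(u)), as an identity of ℂ(u,v)-linear endomorphisms of F. -/

import Mathlib

/-!
Both sides send `f` to sums `∑ₖ gₖ · β_{j,k}⁻¹(f)` with explicit multipliers `gₖ`, so it
suffices to compare the multipliers. Writing `φ` for the multiplier of `H_i(u)`,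
`x = u - γ_{j,k}` and `c = (iħ/2)·d_i·a_{ij}`, the `k`-th terms agree as soon as
`(x - c)·φ = (x + c)·β_{j,k}⁻¹(φ)`.
For `i = j` this is read off from the factor `x·(x - iħd_i)` of the denominator of `φ`, which
`β_{i,k}⁻¹` turns into `(x + iħd_i)·x`. For `i ≠ j` the shift by `iħd_j` telescopes the
`-a_{ji}` numerator factors containing `γ_{j,k}`, and `d_i a_{ij} = d_j a_{ji}` identifies the
two ends of the telescope with `x ± c`.
-/

open MvPolynomial Complex Finset

noncomputable section

/-- Variables: two spectral variables `u, v` (indexed by `Fin 2`) and the `γ_{i,k}`. -/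
abbrev Var (ℓ : ℕ) (m : Fin ℓ → ℕ) := Fin 2 ⊕ ((i : Fin ℓ) × Fin (m i))

/-- The field of rational functions over `ℂ` in the variables `u, v, γ_{i,k}`. -/
abbrev FF (ℓ : ℕ) (m : Fin ℓ → ℕ) := FractionRing (MvPolynomial (Var ℓ m) ℂ)

variable (ℓ : ℕ) (m : Fin ℓ → ℕ)

/-- The embedding of constants `ℂ → F`. -/
def cstHom : ℂ →+* FF ℓ m :=
  (algebraMap (MvPolynomial (Var ℓ m) ℂ) (FF ℓ m)).comp (C : ℂ →+* MvPolynomial (Var ℓ m) ℂ)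

def cst (c : ℂ) : FF ℓ m := cstHom ℓ m c

/-- The variable `γ_{i,k}` as an element of `F`. -/
def gam (i : Fin ℓ) (k : Fin (m i)) : FF ℓ m :=
  algebraMap (MvPolynomial (Var ℓ m) ℂ) (FF ℓ m) (X (Sum.inr ⟨i, k⟩))

/-- The spectral variables: `spec 0 = u`, `spec 1 = v`. -/
def spec (t : Fin 2) : FF ℓ m :=
  algebraMap (MvPolynomial (Var ℓ m) ℂ) (FF ℓ m) (X (Sum.inl t))

/-- The algebra automorphism of the polynomial ring shifting the variable `w` by `c`
and fixing all other variables. -/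
def shiftPoly (c : ℂ) (w : Var ℓ m) :
    MvPolynomial (Var ℓ m) ℂ ≃ₐ[ℂ] MvPolynomial (Var ℓ m) ℂ :=
  AlgEquiv.ofAlgHom
    (aeval (fun j => if j = w then X j + MvPolynomial.C c else X j))
    (aeval (fun j => if j = w then X j - MvPolynomial.C c else X j))
    (by apply MvPolynomial.algHom_ext; intro j; by_cases h : j = w <;> simp [h])
    (by apply MvPolynomial.algHom_ext; intro j; by_cases h : j = w <;> simp [h])

/-- The induced automorphism of the field of rational functions. -/
def shiftField (c : ℂ) (w : Var ℓ m) : FF ℓ m ≃+* FF ℓ m :=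
  IsFractionRing.ringEquivOfRingEquiv (shiftPoly ℓ m c w).toRingEquiv

variable (a : Fin ℓ → Fin ℓ → ℤ) (d : Fin ℓ → ℕ) (hb : ℂ)

/-- `β_{i,k}` : the automorphism `γ_{i,k} ↦ γ_{i,k} + iħ·d_i`. -/
def beta (i : Fin ℓ) (k : Fin (m i)) : FF ℓ m ≃+* FF ℓ m :=
  shiftField ℓ m (I * hb * (d i : ℂ)) (Sum.inr ⟨i, k⟩)

/-- The constant `(iħ/2)·(d_i·a_{ij} + 2r·d_j)`, where `r` is offset by one
(so that `r` ranges over `0, …, −a_{ji} − 1` in `Finset.range`). -/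
def cf (i j : Fin ℓ) (r : ℕ) : ℂ :=
  (I * hb / 2) * ((d i : ℂ) * (a i j : ℂ) + 2 * ((r : ℂ) + 1) * (d j : ℂ))

/-- The value `R_i(w)` of the rational function `R_i ∈ ℂ(x)` at `w ∈ F`. -/
def Rval (R : Fin ℓ → RatFunc ℂ) (i : Fin ℓ) (w : FF ℓ m) : FF ℓ m :=
  Polynomial.eval₂ (cstHom ℓ m) w (R i).num / Polynomial.eval₂ (cstHom ℓ m) w (R i).denom

/-- The operator `H_i(w)`: multiplication by the rational function
`R_i(w)·Π_{j≠i}Π_{r=1}^{−a_{ji}}Π_{p=1}^{m_j}(w − γ_{j,p} − (iħ/2)(d_i a_{ij} + 2 r d_j))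
  / Π_{p=1}^{m_i}(w − γ_{i,p})(w − γ_{i,p} − iħ d_i)`. -/
def Hop (R : Fin ℓ → RatFunc ℂ) (i : Fin ℓ) (w : FF ℓ m) : FF ℓ m → FF ℓ m := fun f =>
  (Rval ℓ m R i w *
    (∏ j ∈ univ.erase i, ∏ r ∈ range (-(a j i)).toNat, ∏ p : Fin (m j),
      (w - gam ℓ m j p - cst ℓ m (cf ℓ a d hb i j r))) /
    (∏ p : Fin (m i),
      ((w - gam ℓ m i p) * (w - gam ℓ m i p - cst ℓ m (I * hb * (d i : ℂ)))))) * f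

/-- The operator `E_i(w)`. -/
def Eop (i : Fin ℓ) (w : FF ℓ m) : FF ℓ m → FF ℓ m := fun f =>
  cst ℓ m ((d i : ℂ) ^ (-(1/2 : ℂ))) *
    ∑ k : Fin (m i),
      ((∏ j ∈ univ.filter (fun j => i < j), ∏ r ∈ range (-(a j i)).toNat, ∏ p : Fin (m j),
          (gam ℓ m i k - gam ℓ m j p - cst ℓ m (cf ℓ a d hb i j r))) /
        ((w - gam ℓ m i k) * ∏ p ∈ univ.erase k, (gam ℓ m i k - gam ℓ m i p))) *
      (beta ℓ m d hb i k).symm f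

theorem MvPolynomial.X_sub_X_sub_C_ne_zero {σ R : Type*} [CommRing R] [Nontrivial R]
    {w₁ w₂ : σ} (h : w₁ ≠ w₂) (c : R) : (X w₁ - X w₂ - C c : MvPolynomial σ R) ≠ 0 := by
  classical
  intro h0
  have := congrArg (eval (Function.update 0 w₁ (c + 1))) h0
  simp [Function.update_of_ne h.symm] at this

theorem Finset.map_prod_eq_map_mul_prod_erase {ι M F : Type*} [CommMonoid M] [FunLike F M M]
    [MonoidHomClass F M M] [DecidableEq ι] (σ : F) {s : Finset ι} {x : ι} (hx : x ∈ s)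
    (f : ι → M) (hf : ∀ y ∈ s, y ≠ x → σ (f y) = f y) :
    σ (∏ y ∈ s, f y) = σ (f x) * ∏ y ∈ s.erase x, f y := by
  rw [← mul_prod_erase s f hx, map_mul, map_prod]
  exact congrArg _ (prod_congr rfl fun y hy => hf y (mem_of_mem_erase hy) (ne_of_mem_erase hy))

theorem Finset.sub_mul_prod_range_sub_mul {R : Type*} [CommRing R] (y t : R) (n : ℕ) :
    (y - n * t) * ∏ r ∈ range n, (y - r * t) = y * ∏ r ∈ range n, (y - (r + 1) * t) := by
  have h := (prod_range_succ (fun r : ℕ => y - r * t) n).symm.trans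
    (prod_range_succ' (fun r : ℕ => y - r * t) n)
  push_cast at h
  linear_combination h

theorem sub_mul_inv_mul_sub_eq_neg_mul {K : Type*} [Field K] {x y c φ ψ : K} (hx : x ≠ 0)
    (hy : y ≠ 0) (h : (x - c) * φ = (x + c) * ψ) :
    (x - y) * (y⁻¹ * (φ - ψ)) = -c * ((x⁻¹ - y⁻¹) * (φ + ψ)) := by
  field_simp
  linear_combination (x - y) * h

def hNum (i : Fin ℓ) (w : FF ℓ m) : FF ℓ m :=
  ∏ j ∈ univ.erase i, ∏ r ∈ range (-(a j i)).toNat, ∏ p : Fin (m j),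
    (w - gam ℓ m j p - cst ℓ m (cf ℓ a d hb i j r))

def hDen (i : Fin ℓ) (w : FF ℓ m) : FF ℓ m :=
  ∏ p : Fin (m i), ((w - gam ℓ m i p) * (w - gam ℓ m i p - cst ℓ m (I * hb * d i)))

def hCoeff (R : Fin ℓ → RatFunc ℂ) (i : Fin ℓ) (w : FF ℓ m) : FF ℓ m :=
  Rval ℓ m R i w * hNum ℓ m a d hb i w / hDen ℓ m d hb i w

theorem Hop_apply (R : Fin ℓ → RatFunc ℂ) (i : Fin ℓ) (w f : FF ℓ m) :
    Hop ℓ m a d hb R i w f = hCoeff ℓ m a d hb R i w * f :=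
  rfl

def eResidue (j : Fin ℓ) (k : Fin (m j)) : FF ℓ m :=
  (∏ j' ∈ univ.filter (fun j' => j < j'), ∏ r ∈ range (-(a j' j)).toNat, ∏ p : Fin (m j'),
      (gam ℓ m j k - gam ℓ m j' p - cst ℓ m (cf ℓ a d hb j j' r))) /
    ∏ p ∈ univ.erase k, (gam ℓ m j k - gam ℓ m j p)

theorem Eop_apply (j : Fin ℓ) (w f : FF ℓ m) :
    Eop ℓ m a d hb j w f = cst ℓ m ((d j : ℂ) ^ (-(1/2 : ℂ))) *
      ∑ k : Fin (m j),
        eResidue ℓ m a d hb j k * (w - gam ℓ m j k)⁻¹ * (beta ℓ m d hb j k).symm f := by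
  simp only [Eop, eResidue, div_eq_mul_inv, mul_inv]
  exact congrArg _ (sum_congr rfl fun k _ => by ring)

variable {ℓ m a d hb}

theorem spec_sub_gam_sub_cst_ne_zero (s : Fin 2) (j : Fin ℓ) (p : Fin (m j)) (c : ℂ) :
    spec ℓ m s - gam ℓ m j p - cst ℓ m c ≠ 0 := by
  rw [spec, gam, cst, cstHom, RingHom.comp_apply, ← map_sub, ← map_sub]
  exact (map_ne_zero_iff _ (IsFractionRing.injective _ _)).mpr
    (X_sub_X_sub_C_ne_zero Sum.inl_ne_inr c)

theorem spec_sub_gam_ne_zero (s : Fin 2) (j : Fin ℓ) (p : Fin (m j)) :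
    spec ℓ m s - gam ℓ m j p ≠ 0 := by
  simpa [cst] using spec_sub_gam_sub_cst_ne_zero s j p 0

theorem shiftPoly_symm_X (c : ℂ) (w w' : Var ℓ m) :
    (shiftPoly ℓ m c w).symm (X w') = if w' = w then X w' - C c else X w' := by
  rw [shiftPoly, AlgEquiv.ofAlgHom_symm]
  split_ifs with h <;> simp [h]

theorem beta_symm_algebraMap (j : Fin ℓ) (k : Fin (m j)) (p : MvPolynomial (Var ℓ m) ℂ) :
    (beta ℓ m d hb j k).symm (algebraMap (MvPolynomial (Var ℓ m) ℂ) (FF ℓ m) p)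
      = algebraMap (MvPolynomial (Var ℓ m) ℂ) (FF ℓ m)
          ((shiftPoly ℓ m (I * hb * d j) (Sum.inr ⟨j, k⟩)).symm p) := by
  rw [RingEquiv.symm_apply_eq, beta, shiftField, IsFractionRing.ringEquivOfRingEquiv_algebraMap]
  simp

theorem beta_symm_cst (j : Fin ℓ) (k : Fin (m j)) (c : ℂ) :
    (beta ℓ m d hb j k).symm (cst ℓ m c) = cst ℓ m c := by
  rw [cst, cstHom, RingHom.comp_apply, beta_symm_algebraMap]
  exact congrArg _ ((shiftPoly ℓ m _ _).symm.commutes c)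

theorem beta_symm_spec (j : Fin ℓ) (k : Fin (m j)) (s : Fin 2) :
    (beta ℓ m d hb j k).symm (spec ℓ m s) = spec ℓ m s := by
  rw [spec, beta_symm_algebraMap, shiftPoly_symm_X, if_neg Sum.inl_ne_inr]

theorem beta_symm_gam_self (j : Fin ℓ) (k : Fin (m j)) :
    (beta ℓ m d hb j k).symm (gam ℓ m j k) = gam ℓ m j k - cst ℓ m (I * hb * d j) := by
  rw [gam, beta_symm_algebraMap, shiftPoly_symm_X, if_pos rfl, map_sub]
  rfl

theorem beta_symm_gam_of_ne {j j' : Fin ℓ} {k : Fin (m j)} {p : Fin (m j')}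
    (h : (⟨j', p⟩ : (i : Fin ℓ) × Fin (m i)) ≠ ⟨j, k⟩) :
    (beta ℓ m d hb j k).symm (gam ℓ m j' p) = gam ℓ m j' p := by
  rw [gam, beta_symm_algebraMap, shiftPoly_symm_X, if_neg (by simpa using h)]

theorem beta_symm_Rval (j : Fin ℓ) (k : Fin (m j)) (R : Fin ℓ → RatFunc ℂ) (i : Fin ℓ)
    (s : Fin 2) :
    (beta ℓ m d hb j k).symm (Rval ℓ m R i (spec ℓ m s)) = Rval ℓ m R i (spec ℓ m s) := by
  have hcst : ((beta ℓ m d hb j k).symm : FF ℓ m →+* FF ℓ m).comp (cstHom ℓ m) = cstHom ℓ m :=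
    RingHom.ext (beta_symm_cst j k)
  have heval (q : Polynomial ℂ) : (beta ℓ m d hb j k).symm (q.eval₂ (cstHom ℓ m) (spec ℓ m s))
      = q.eval₂ (cstHom ℓ m) (spec ℓ m s) := by
    rw [← RingEquiv.coe_toRingHom, Polynomial.hom_eval₂, hcst, RingEquiv.coe_toRingHom,
      beta_symm_spec]
  rw [Rval, map_div₀, heval, heval]

theorem beta_symm_spec_sub_gam_self_sub_cst (j : Fin ℓ) (k : Fin (m j)) (s : Fin 2) (c : ℂ) :
    (beta ℓ m d hb j k).symm (spec ℓ m s - gam ℓ m j k - cst ℓ m c)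
      = spec ℓ m s - gam ℓ m j k - cst ℓ m (c - I * hb * d j) := by
  rw [map_sub, map_sub, beta_symm_spec, beta_symm_cst, beta_symm_gam_self]
  simp only [cst, map_sub]
  ring

theorem hNum_eq_prod_sigma (i : Fin ℓ) (w : FF ℓ m) :
    hNum ℓ m a d hb i w = ∏ q ∈ (univ.erase i).sigma fun j => (univ : Finset (Fin (m j))),
      ∏ r ∈ range (-(a q.1 i)).toNat, (w - gam ℓ m q.1 q.2 - cst ℓ m (cf ℓ a d hb i q.1 r)) := by
  rw [prod_sigma, hNum]
  exact prod_congr rfl fun j _ => prod_comm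

theorem beta_symm_prod_spec_sub_gam_sub_cst_of_ne {ι : Type*} {j j' : Fin ℓ} {k : Fin (m j)}
    {p : Fin (m j')} (h : (⟨j', p⟩ : (i : Fin ℓ) × Fin (m i)) ≠ ⟨j, k⟩) (s : Fin 2)
    (t : Finset ι) (c : ι → ℂ) :
    (beta ℓ m d hb j k).symm (∏ r ∈ t, (spec ℓ m s - gam ℓ m j' p - cst ℓ m (c r)))
      = ∏ r ∈ t, (spec ℓ m s - gam ℓ m j' p - cst ℓ m (c r)) := by
  rw [map_prod]
  exact prod_congr rfl fun r _ => by
    rw [map_sub, map_sub, beta_symm_spec, beta_symm_cst, beta_symm_gam_of_ne h]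

theorem beta_symm_hNum_self (i : Fin ℓ) (k : Fin (m i)) (s : Fin 2) :
    (beta ℓ m d hb i k).symm (hNum ℓ m a d hb i (spec ℓ m s)) = hNum ℓ m a d hb i (spec ℓ m s) := by
  rw [hNum_eq_prod_sigma, map_prod]
  refine prod_congr rfl fun q hq => beta_symm_prod_spec_sub_gam_sub_cst_of_ne ?_ s _ _
  exact fun h => (mem_erase.mp (mem_sigma.mp hq).1).1 (congrArg Sigma.fst h)

theorem beta_symm_hDen_of_ne {i j : Fin ℓ} (hij : i ≠ j) (k : Fin (m j)) (s : Fin 2) :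
    (beta ℓ m d hb j k).symm (hDen ℓ m d hb i (spec ℓ m s)) = hDen ℓ m d hb i (spec ℓ m s) := by
  rw [hDen, map_prod]
  refine prod_congr rfl fun p _ => ?_
  simp only [map_mul, map_sub, beta_symm_spec, beta_symm_cst,
    beta_symm_gam_of_ne fun h => hij (congrArg Sigma.fst h)]

theorem hDen_ne_zero (i : Fin ℓ) (s : Fin 2) : hDen ℓ m d hb i (spec ℓ m s) ≠ 0 :=
  prod_ne_zero_iff.mpr fun p _ =>
    mul_ne_zero (spec_sub_gam_ne_zero s i p) (spec_sub_gam_sub_cst_ne_zero s i p _)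

theorem sub_mul_beta_symm_hDen_self (i : Fin ℓ) (k : Fin (m i)) (s : Fin 2) :
    (spec ℓ m s - gam ℓ m i k - cst ℓ m (I * hb * d i)) *
        (beta ℓ m d hb i k).symm (hDen ℓ m d hb i (spec ℓ m s))
      = (spec ℓ m s - gam ℓ m i k + cst ℓ m (I * hb * d i)) * hDen ℓ m d hb i (spec ℓ m s) := by
  have hfix : ∀ p ∈ univ, p ≠ k → (beta ℓ m d hb i k).symm
      ((spec ℓ m s - gam ℓ m i p) * (spec ℓ m s - gam ℓ m i p - cst ℓ m (I * hb * d i)))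
        = (spec ℓ m s - gam ℓ m i p) * (spec ℓ m s - gam ℓ m i p - cst ℓ m (I * hb * d i)) :=
    fun p _ hp => by
      simp only [map_mul, map_sub, beta_symm_spec, beta_symm_cst,
        beta_symm_gam_of_ne (show (⟨i, p⟩ : (i : Fin ℓ) × Fin (m i)) ≠ ⟨i, k⟩ by simpa using hp)]
  rw [hDen, map_prod_eq_map_mul_prod_erase _ (mem_univ k) _ hfix, ← mul_prod_erase _ _ (mem_univ k)]
  simp only [map_mul, map_sub, beta_symm_spec, beta_symm_cst, beta_symm_gam_self]
  ring

theorem natCast_toNat_neg_mul_eq (ha' : ∀ i j, i ≠ j → a i j ≤ 0)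
    (hsym : ∀ i j, (d i : ℤ) * a i j = (d j : ℤ) * a j i) {i j : Fin ℓ} (hij : i ≠ j) :
    ((-(a j i)).toNat : FF ℓ m) * cst ℓ m (I * hb * d j)
      = -(2 * cst ℓ m (I * hb / 2 * (d i * a i j))) := by
  have hn : (((-(a j i)).toNat : ℤ) : ℂ) = -(a j i) := by
    rw [Int.toNat_of_nonneg (neg_nonneg.mpr (ha' j i hij.symm))]
    push_cast; ring
  have hsymC : (d i : ℂ) * a i j = d j * a j i := by exact_mod_cast hsym i j
  rw [← map_natCast (cstHom ℓ m), cst, cst, ← map_mul, ← map_ofNat (cstHom ℓ m) 2, ← map_mul,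
    ← map_neg]
  congr 1
  push_cast at hn ⊢
  linear_combination (I * hb * d j) * hn + I * hb * hsymC

theorem add_mul_beta_symm_prod_cf (ha' : ∀ i j, i ≠ j → a i j ≤ 0)
    (hsym : ∀ i j, (d i : ℤ) * a i j = (d j : ℤ) * a j i) {i j : Fin ℓ} (hij : i ≠ j)
    (k : Fin (m j)) (s : Fin 2) :
    (spec ℓ m s - gam ℓ m j k + cst ℓ m (I * hb / 2 * (d i * a i j))) *
        (beta ℓ m d hb j k).symm (∏ r ∈ range (-(a j i)).toNat,
          (spec ℓ m s - gam ℓ m j k - cst ℓ m (cf ℓ a d hb i j r)))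
      = (spec ℓ m s - gam ℓ m j k - cst ℓ m (I * hb / 2 * (d i * a i j))) *
        ∏ r ∈ range (-(a j i)).toNat, (spec ℓ m s - gam ℓ m j k - cst ℓ m (cf ℓ a d hb i j r)) := by
  set y := spec ℓ m s - gam ℓ m j k - cst ℓ m (I * hb / 2 * (d i * a i j))
  set t := cst ℓ m (I * hb * d j)
  have hshift (r : ℕ) :
      spec ℓ m s - gam ℓ m j k - cst ℓ m (cf ℓ a d hb i j r - I * hb * d j) = y - r * t := by
    simp only [y, t, cf, cst, map_sub, map_add, map_mul, map_div₀, map_natCast, map_ofNat,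
      map_one]
    ring
  have hcf (r : ℕ) : spec ℓ m s - gam ℓ m j k - cst ℓ m (cf ℓ a d hb i j r) = y - (r + 1) * t := by
    simp only [y, t, cf, cst, map_add, map_mul, map_div₀, map_natCast, map_ofNat,
      map_one]
    ring
  have hend : y - (-(a j i)).toNat * t
      = spec ℓ m s - gam ℓ m j k + cst ℓ m (I * hb / 2 * (d i * a i j)) := by
    rw [natCast_toNat_neg_mul_eq ha' hsym hij]
    ring
  rw [map_prod]
  simp only [beta_symm_spec_sub_gam_self_sub_cst]
  simp only [hshift, hcf, ← hend]
  exact sub_mul_prod_range_sub_mul y t _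

theorem add_mul_beta_symm_hNum_of_ne (ha' : ∀ i j, i ≠ j → a i j ≤ 0)
    (hsym : ∀ i j, (d i : ℤ) * a i j = (d j : ℤ) * a j i) {i j : Fin ℓ} (hij : i ≠ j)
    (k : Fin (m j)) (s : Fin 2) :
    (spec ℓ m s - gam ℓ m j k + cst ℓ m (I * hb / 2 * (d i * a i j))) *
        (beta ℓ m d hb j k).symm (hNum ℓ m a d hb i (spec ℓ m s))
      = (spec ℓ m s - gam ℓ m j k - cst ℓ m (I * hb / 2 * (d i * a i j))) *
        hNum ℓ m a d hb i (spec ℓ m s) := by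
  have hmem : (⟨j, k⟩ : (i : Fin ℓ) × Fin (m i))
      ∈ (univ.erase i).sigma fun j => (univ : Finset (Fin (m j))) := by
    simpa using hij.symm
  rw [hNum_eq_prod_sigma, map_prod_eq_map_mul_prod_erase _ hmem _
      fun q _ hq => beta_symm_prod_spec_sub_gam_sub_cst_of_ne hq s _ _,
    ← mul_prod_erase _ _ hmem, ← mul_assoc, add_mul_beta_symm_prod_cf ha' hsym hij k s, mul_assoc]

theorem sub_mul_hCoeff_eq_add_mul_beta_symm (ha : ∀ i, a i i = 2)
    (ha' : ∀ i j, i ≠ j → a i j ≤ 0) (hsym : ∀ i j, (d i : ℤ) * a i j = (d j : ℤ) * a j i)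
    (R : Fin ℓ → RatFunc ℂ) (i j : Fin ℓ) (k : Fin (m j)) (s : Fin 2) :
    (spec ℓ m s - gam ℓ m j k - cst ℓ m (I * hb / 2 * (d i * a i j))) *
        hCoeff ℓ m a d hb R i (spec ℓ m s)
      = (spec ℓ m s - gam ℓ m j k + cst ℓ m (I * hb / 2 * (d i * a i j))) *
        (beta ℓ m d hb j k).symm (hCoeff ℓ m a d hb R i (spec ℓ m s)) := by
  rw [hCoeff, map_div₀, map_mul, beta_symm_Rval]
  by_cases hij : i = j
  · subst hij
    have hc : I * hb / 2 * (d i * a i i) = I * hb * d i := by rw [ha]; push_cast; ring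
    have hD := hDen_ne_zero (m := m) (d := d) (hb := hb) i s
    rw [hc, beta_symm_hNum_self, ← mul_div_assoc, ← mul_div_assoc,
      div_eq_div_iff hD ((map_ne_zero _).mpr hD)]
    linear_combination Rval ℓ m R i (spec ℓ m s) * hNum ℓ m a d hb i (spec ℓ m s) *
      sub_mul_beta_symm_hDen_self i k s
  · rw [beta_symm_hDen_of_ne hij]
    linear_combination Rval ℓ m R i (spec ℓ m s) / hDen ℓ m d hb i (spec ℓ m s) *
      (add_mul_beta_symm_hNum_of_ne ha' hsym hij k s).symm

theorem yangian_cartan_raising_general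
    (ℓ : ℕ)
    (a : Fin ℓ → Fin ℓ → ℤ) (ha : ∀ i, a i i = 2) (ha' : ∀ i j, i ≠ j → a i j ≤ 0)
    (d : Fin ℓ → ℕ)
    (hsym : ∀ i j, (d i : ℤ) * a i j = (d j : ℤ) * a j i)
    (hb : ℂ) (m : Fin ℓ → ℕ)
    (R : Fin ℓ → RatFunc ℂ)
    (i j : Fin ℓ) :
    (spec ℓ m 0 - spec ℓ m 1) •
        (Hop ℓ m a d hb R i (spec ℓ m 0) ∘ Eop ℓ m a d hb j (spec ℓ m 1)
          - Eop ℓ m a d hb j (spec ℓ m 1) ∘ Hop ℓ m a d hb R i (spec ℓ m 0))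
      = cst ℓ m (-(I * hb / 2) * ((d i : ℂ) * (a i j : ℂ))) •
        (Hop ℓ m a d hb R i (spec ℓ m 0) ∘
            (Eop ℓ m a d hb j (spec ℓ m 0) - Eop ℓ m a d hb j (spec ℓ m 1))
          + (Eop ℓ m a d hb j (spec ℓ m 0) - Eop ℓ m a d hb j (spec ℓ m 1)) ∘
            Hop ℓ m a d hb R i (spec ℓ m 0)) := by
  funext f
  have hneg : cst ℓ m (-(I * hb / 2) * (d i * a i j)) = -cst ℓ m (I * hb / 2 * (d i * a i j)) := by
    rw [cst, cst, ← map_neg, neg_mul]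
  simp only [Pi.smul_apply, Pi.sub_apply, Pi.add_apply, Function.comp_apply, smul_eq_mul,
    Hop_apply, Eop_apply, map_mul, mul_sum, ← sum_sub_distrib, ← sum_add_distrib, hneg]
  refine sum_congr rfl fun k _ => ?_
  linear_combination
    (cst ℓ m ((d j : ℂ) ^ (-(1/2 : ℂ))) * eResidue ℓ m a d hb j k * (beta ℓ m d hb j k).symm f) *
      sub_mul_inv_mul_sub_eq_neg_mul (spec_sub_gam_ne_zero 0 j k) (spec_sub_gam_ne_zero 1 j k)
        (sub_mul_hCoeff_eq_add_mul_beta_symm ha ha' hsym R i j k 0)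

theorem yangian_cartan_raising
    (ℓ : ℕ) (hl : 1 ≤ ℓ)
    (a : Fin ℓ → Fin ℓ → ℤ) (ha : ∀ i, a i i = 2) (ha' : ∀ i j, i ≠ j → a i j ≤ 0)
    (d : Fin ℓ → ℕ) (hd : ∀ i, 0 < d i)
    (hsym : ∀ i j, (d i : ℤ) * a i j = (d j : ℤ) * a j i)
    (hb : ℂ) (m : Fin ℓ → ℕ) (hm : ∀ i, 0 < m i)
    (R : Fin ℓ → RatFunc ℂ)
    (hR : ∀ i, Polynomial.eval₂ (cstHom ℓ m) (spec ℓ m 0) (R i).denom ≠ 0)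
    (i j : Fin ℓ) :
    (spec ℓ m 0 - spec ℓ m 1) •
        (Hop ℓ m a d hb R i (spec ℓ m 0) ∘ Eop ℓ m a d hb j (spec ℓ m 1)
          - Eop ℓ m a d hb j (spec ℓ m 1) ∘ Hop ℓ m a d hb R i (spec ℓ m 0))
      = cst ℓ m (-(I * hb / 2) * ((d i : ℂ) * (a i j : ℂ))) •
        (Hop ℓ m a d hb R i (spec ℓ m 0) ∘
            (Eop ℓ m a d hb j (spec ℓ m 0) - Eop ℓ m a d hb j (spec ℓ m 1))
          + (Eop ℓ m a d hb j (spec ℓ m 0) - Eop ℓ m a d hb j (spec ℓ m 1)) ∘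
            Hop ℓ m a d hb R i (spec ℓ m 0)) :=
  yangian_cartan_raising_general ℓ a ha ha' d hsym hb m R i j
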